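/- arXiv:1604.01169 — 5 statements merged into one kernel-verified Lean document; each statement's English description precedes it below -/
import Mathlib

section
/- Fix an integer m ≥ 1 and define Q : ℕ → {0,1,…,m} → ℝ by Q_0(0) = 1, Q_0(k) = 0 for k ≥ 1, and for d ≥ 1: Q_d(k) = (1/2)·[Q_{d−1}(k−1)·(m−k+1)/m + Q_{d−1}(k)·(m+k)/m], with the convention Q_{d−1}(−1) = 0. Then the limit of Q_d(m) as d → ∞ equals 1. -/
/-- Fix `m ≥ 1` and let `Q : ℕ → ℤ → ℝ` (restricted to `k ∈ {0,…,m}`) satisfy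
`Q 0 0 = 1`, `Q 0 k = 0` for `1 ≤ k ≤ m`, the convention `Q d (-1) = 0`, and for
`d ≥ 1` and `0 ≤ k ≤ m`:
`Q d k = (1/2)·[Q (d-1) (k-1)·(m−k+1)/m + Q (d-1) k·(m+k)/m]`.
Then `Q d m → 1` as `d → ∞`. -/
theorem Q_top_order_tendsto_one (m : ℕ) (hm : 1 ≤ m) (Q : ℕ → ℤ → ℝ)
    (h00 : Q 0 0 = 1)
    (h0 : ∀ k : ℤ, 1 ≤ k → k ≤ (m : ℤ) → Q 0 k = 0)
    (hneg : ∀ d : ℕ, Q d (-1) = 0)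
    (hrec : ∀ d : ℕ, ∀ k : ℤ, 0 ≤ k → k ≤ (m : ℤ) →
      Q (d + 1) k = (1 / 2) *
        (Q d (k - 1) * ((m : ℝ) - (k : ℝ) + 1) / (m : ℝ) +
          Q d k * ((m : ℝ) + (k : ℝ)) / (m : ℝ))) :
    Filter.Tendsto (fun d : ℕ => Q d (m : ℤ)) Filter.atTop (nhds 1) := by
  have hmR : (0:ℝ) < (m:ℝ) := by exact_mod_cast hm
  have hmne : (m:ℝ) ≠ 0 := ne_of_gt hmR
  -- nonnegativity
  have hQnn : ∀ d, ∀ k : ℤ, 0 ≤ k → k ≤ (m:ℤ) → 0 ≤ Q d k := by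
    intro d
    induction d with
    | zero =>
      intro k hk0 hkm
      rcases eq_or_lt_of_le hk0 with h | h
      · rw [← h, h00]; norm_num
      · rw [h0 k h hkm]
    | succ d ih =>
      intro k hk0 hkm
      rw [hrec d k hk0 hkm]
      have h1 : 0 ≤ Q d (k - 1) := by
        rcases eq_or_lt_of_le hk0 with h | h
        · rw [← h]; simpa using (hneg d).ge
        · exact ih (k - 1) (by omega) (by omega)
      have h2 : 0 ≤ Q d k := ih k hk0 hkm
      have c1 : (0:ℝ) ≤ (m:ℝ) - (k:ℝ) + 1 := by
        have : (k:ℝ) ≤ (m:ℝ) := by exact_mod_cast hkm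
        linarith
      have c2 : (0:ℝ) ≤ (m:ℝ) + (k:ℝ) := by
        have : (0:ℝ) ≤ (k:ℝ) := by exact_mod_cast hk0
        linarith
      have := mul_nonneg h1 c1
      have := mul_nonneg h2 c2
      have hd1 : 0 ≤ Q d (k - 1) * ((m:ℝ) - (k:ℝ) + 1) / (m:ℝ) :=
        div_nonneg (mul_nonneg h1 c1) (le_of_lt hmR)
      have hd2 : 0 ≤ Q d k * ((m:ℝ) + (k:ℝ)) / (m:ℝ) :=
        div_nonneg (mul_nonneg h2 c2) (le_of_lt hmR)
      linarith
  -- the shifting identity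
  have shift : ∀ (F : ℤ → ℝ), F (-1) = 0 → F (m:ℤ) = 0 →
      (∑ k ∈ Finset.range (m + 1), F ((k:ℤ) - 1)) =
        ∑ k ∈ Finset.range (m + 1), F (k:ℤ) := by
    intro F hFn hFm
    rw [Finset.sum_range_succ' (fun k => F ((k:ℤ) - 1)) m]
    rw [Finset.sum_range_succ (fun k => F (k:ℤ)) m, hFm]
    simp only [Nat.cast_zero, zero_sub, hFn, add_zero]
    refine Finset.sum_congr rfl fun i _ => ?_
    push_cast
    ring_nf
  set S : ℕ → ℝ := fun d => ∑ k ∈ Finset.range (m + 1), Q d (k:ℤ) with hSdef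
  set E : ℕ → ℝ := fun d => ∑ k ∈ Finset.range (m + 1), (k:ℝ) * Q d (k:ℤ) with hEdef
  have hcast : ∀ k : ℕ, k ∈ Finset.range (m + 1) → (0:ℤ) ≤ (k:ℤ) ∧ (k:ℤ) ≤ (m:ℤ) := by
    intro k hk
    simp only [Finset.mem_range] at hk
    omega
  -- S d = 1
  have hS : ∀ d, S d = 1 := by
    intro d
    induction d with
    | zero =>
      simp only [hSdef]
      rw [Finset.sum_range_succ' (fun k => Q 0 (k:ℤ)) m]
      have : ∀ i ∈ Finset.range m, Q 0 ((i:ℤ) + 1) = 0 := by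
        intro i hi
        simp only [Finset.mem_range] at hi
        exact h0 _ (by omega) (by omega)
      rw [Finset.sum_congr rfl (fun i hi => by push_cast; rw [this i hi])]
      simpa using h00
    | succ d ih =>
      have key : S (d + 1) =
          (1 / (2 * (m:ℝ))) * ((∑ k ∈ Finset.range (m + 1),
              Q d ((k:ℤ) - 1) * ((m:ℝ) - (((k:ℤ) - 1 : ℤ):ℝ))) +
            ∑ k ∈ Finset.range (m + 1), Q d (k:ℤ) * ((m:ℝ) + (k:ℝ))) := by
        simp only [hSdef]
        rw [mul_add, Finset.mul_sum, Finset.mul_sum, ← Finset.sum_add_distrib]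
        refine Finset.sum_congr rfl fun k hk => ?_
        obtain ⟨h1, h2⟩ := hcast k hk
        rw [hrec d (k:ℤ) h1 h2]
        set a := Q d ((k:ℤ) - 1) with ha
        set b := Q d (k:ℤ) with hb
        push_cast
        have hxy : (m:ℝ) - ((k:ℝ) - 1) = (m:ℝ) - (k:ℝ) + 1 := by ring
        rw [hxy]
        field_simp
      rw [key, shift (fun j => Q d j * ((m:ℝ) - (j:ℝ)))
        (by simp [hneg]) (by simp)]
      push_cast
      have : (∑ k ∈ Finset.range (m + 1), Q d (k:ℤ) * ((m:ℝ) - (k:ℝ))) +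
          ∑ k ∈ Finset.range (m + 1), Q d (k:ℤ) * ((m:ℝ) + (k:ℝ)) =
          (2 * (m:ℝ)) * S d := by
        simp only [hSdef]
        rw [← Finset.sum_add_distrib, Finset.mul_sum]
        refine Finset.sum_congr rfl fun k _ => ?_
        ring
      rw [this, ih]
      field_simp
  -- E recurrence
  have hErec : ∀ d, E (d + 1) = E d + ((m:ℝ) - E d) / (2 * (m:ℝ)) := by
    intro d
    have key : E (d + 1) =
        (1 / (2 * (m:ℝ))) * ((∑ k ∈ Finset.range (m + 1),
            ((((k:ℤ) - 1 : ℤ):ℝ) + 1) * Q d ((k:ℤ) - 1) * ((m:ℝ) - (((k:ℤ) - 1 : ℤ):ℝ))) +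
          ∑ k ∈ Finset.range (m + 1), (k:ℝ) * Q d (k:ℤ) * ((m:ℝ) + (k:ℝ))) := by
      simp only [hEdef]
      rw [mul_add, Finset.mul_sum, Finset.mul_sum, ← Finset.sum_add_distrib]
      refine Finset.sum_congr rfl fun k hk => ?_
      obtain ⟨h1, h2⟩ := hcast k hk
      rw [hrec d (k:ℤ) h1 h2]
      set a := Q d ((k:ℤ) - 1) with ha
      set b := Q d (k:ℤ) with hb
      push_cast
      field_simp
      ring
    rw [key, shift (fun j => ((j:ℝ) + 1) * Q d j * ((m:ℝ) - (j:ℝ)))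
      (by norm_num) (by simp)]
    push_cast
    have comb : (∑ k ∈ Finset.range (m + 1), ((k:ℝ) + 1) * Q d (k:ℤ) * ((m:ℝ) - (k:ℝ))) +
        ∑ k ∈ Finset.range (m + 1), (k:ℝ) * Q d (k:ℤ) * ((m:ℝ) + (k:ℝ)) =
        (2 * (m:ℝ)) * E d + ((m:ℝ) * S d - E d) := by
      simp only [hSdef, hEdef]
      rw [← Finset.sum_add_distrib, Finset.mul_sum, Finset.mul_sum, ← Finset.sum_sub_distrib,
        ← Finset.sum_add_distrib]
      refine Finset.sum_congr rfl fun k _ => ?_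
      ring
    rw [comb, hS d]
    field_simp
  set r : ℝ := 1 - 1 / (2 * (m:ℝ)) with hrdef
  have hE : ∀ d, (m:ℝ) - E d = (m:ℝ) * r ^ d := by
    intro d
    induction d with
    | zero =>
      have hE0 : E 0 = 0 := by
        simp only [hEdef]
        rw [Finset.sum_range_succ' (fun k => (k:ℝ) * Q 0 (k:ℤ)) m]
        have : ∀ i ∈ Finset.range m, ((i:ℕ) + 1 : ℝ) * Q 0 ((i:ℤ) + 1) = 0 := by
          intro i hi
          simp only [Finset.mem_range] at hi
          rw [h0 _ (by omega) (by omega), mul_zero]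
        rw [Finset.sum_congr rfl (fun i hi => by push_cast; rw [this i hi])]
        simp
      rw [hE0]; simp
    | succ d ih =>
      rw [hErec d]
      have : (m:ℝ) - (E d + ((m:ℝ) - E d) / (2 * (m:ℝ))) = ((m:ℝ) - E d) * r := by
        rw [hrdef]; field_simp; ring
      rw [this, ih, pow_succ]; ring
  -- bounds
  have hub : ∀ d, Q d (m:ℤ) ≤ 1 := by
    intro d
    rw [← hS d]
    have : Q d ((m:ℕ):ℤ) ≤ S d := by
      refine Finset.single_le_sum (f := fun k : ℕ => Q d (k:ℤ)) ?_ ?_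
      · intro k hk
        obtain ⟨h1, h2⟩ := hcast k hk
        exact hQnn d _ h1 h2
      · simp [Finset.mem_range]
    exact this
  have hlb : ∀ d, 1 - (m:ℝ) * r ^ d ≤ Q d (m:ℤ) := by
    intro d
    have h1 : 1 - Q d (m:ℤ) = ∑ k ∈ Finset.range m, Q d (k:ℤ) := by
      have := hS d
      simp only [hSdef] at this
      rw [Finset.sum_range_succ] at this
      linarith
    have h2 : (∑ k ∈ Finset.range m, Q d (k:ℤ)) ≤ (m:ℝ) - E d := by
      have hms : (m:ℝ) - E d = ∑ k ∈ Finset.range (m + 1), ((m:ℝ) - (k:ℝ)) * Q d (k:ℤ) := by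
        have : (m:ℝ) - E d = (m:ℝ) * S d - E d := by rw [hS d]; ring
        rw [this]
        simp only [hSdef, hEdef]
        rw [Finset.mul_sum, ← Finset.sum_sub_distrib]
        refine Finset.sum_congr rfl fun k _ => ?_
        ring
      rw [hms, Finset.sum_range_succ]
      have hlast : ((m:ℝ) - (m:ℝ)) * Q d ((m:ℕ):ℤ) = 0 := by ring
      rw [hlast, add_zero]
      refine Finset.sum_le_sum ?_
      intro k hk
      simp only [Finset.mem_range] at hk
      have hq : 0 ≤ Q d (k:ℤ) := hQnn d _ (by omega) (by omega)
      have : (1:ℝ) ≤ (m:ℝ) - (k:ℝ) := by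
        have : (k:ℝ) + 1 ≤ (m:ℝ) := by exact_mod_cast hk
        linarith
      nlinarith
    have := hE d
    linarith
  -- squeeze
  have hr0 : 0 ≤ r := by
    rw [hrdef]
    have h1m : (1:ℝ) ≤ (m:ℝ) := by exact_mod_cast hm
    have : 1 / (2 * (m:ℝ)) ≤ 1 / 2 := by
      rw [div_le_div_iff₀ (by linarith) (by norm_num)]
      linarith
    linarith
  have hr1 : r < 1 := by
    rw [hrdef]
    have : 0 < 1 / (2 * (m:ℝ)) := by positivity
    linarith
  have hlim : Filter.Tendsto (fun d : ℕ => 1 - (m:ℝ) * r ^ d) Filter.atTop (nhds 1) := by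
    have hp : Filter.Tendsto (fun d : ℕ => r ^ d) Filter.atTop (nhds 0) :=
      tendsto_pow_atTop_nhds_zero_of_lt_one hr0 hr1
    have := Filter.Tendsto.const_sub (1:ℝ) (hp.const_mul (m:ℝ))
    simpa using this
  exact tendsto_of_tendsto_of_tendsto_of_le_of_le hlim tendsto_const_nhds
    (fun d => hlb d) (fun d => hub d)
end

section
/- Fix an integer m ≥ 1 and define Q : ℕ → {0,1,…,m} → ℝ by Q_0(0) = 1, Q_0(k) = 0 for k ≥ 1, and for d ≥ 1: Q_d(k) = (1/2)·[Q_{d−1}(k−1)·(m−k+1)/m + Q_{d−1}(k)·(m+k)/m], with the convention Q_{d−1}(−1) = 0. Then for every fixed k with 0 ≤ k ≤ m−1, the limit of Q_d(k) as d → ∞ equals 0. -/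
lemma aux_contract_tendsto (c : ℝ) (hc0 : 0 ≤ c) (hc1 : c < 1) (x a : ℕ → ℝ)
    (ha0 : ∀ n, 0 ≤ a n)
    (hrec : ∀ n, |x (n + 1)| ≤ c * |x n| + a n)
    (ha : Filter.Tendsto a Filter.atTop (nhds 0)) :
    Filter.Tendsto x Filter.atTop (nhds 0) := by
  rw [Metric.tendsto_atTop] at ha ⊢
  intro ε hε
  have hc' : 0 < 1 - c := by linarith
  obtain ⟨N, hN⟩ := ha (ε * (1 - c) / 2) (by positivity)
  have key : ∀ p, |x (N + p)| ≤ c ^ p * |x N| + ε / 2 * (1 - c ^ p) := by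
    intro p
    induction p with
    | zero => simp
    | succ p ih =>
      have h2 : a (N + p) < ε * (1 - c) / 2 := by
        have := hN (N + p) (Nat.le_add_right _ _)
        rwa [Real.dist_eq, sub_zero, abs_of_nonneg (ha0 _)] at this
      have hxp : N + (p + 1) = (N + p) + 1 := by ring
      rw [hxp]
      calc |x ((N + p) + 1)| ≤ c * |x (N + p)| + a (N + p) := hrec _
        _ ≤ c * (c ^ p * |x N| + ε / 2 * (1 - c ^ p)) + ε * (1 - c) / 2 := by
            have := mul_le_mul_of_nonneg_left ih hc0
            linarith
        _ = c ^ (p + 1) * |x N| + ε / 2 * (1 - c ^ (p + 1)) := by ring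
  have hpow : Filter.Tendsto (fun p : ℕ => c ^ p * |x N|) Filter.atTop (nhds 0) := by
    have := (tendsto_pow_atTop_nhds_zero_of_lt_one hc0 hc1).mul_const (|x N|)
    simpa using this
  rw [Metric.tendsto_atTop] at hpow
  obtain ⟨P, hP⟩ := hpow (ε / 2) (by positivity)
  refine ⟨N + P, fun n hn => ?_⟩
  have hn' : n = N + (n - N) := by omega
  have hpP : P ≤ n - N := by omega
  have h1 := key (n - N)
  have h2 := hP (n - N) hpP
  rw [Real.dist_eq, sub_zero] at h2 ⊢
  have hcp0 : (0:ℝ) ≤ c ^ (n - N) := pow_nonneg hc0 _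
  rw [abs_of_nonneg (by positivity : (0:ℝ) ≤ c ^ (n - N) * |x N|)] at h2
  rw [hn']
  calc |x (N + (n - N))| ≤ c ^ (n - N) * |x N| + ε / 2 * (1 - c ^ (n - N)) := h1
    _ ≤ c ^ (n - N) * |x N| + ε / 2 := by nlinarith
    _ < ε / 2 + ε / 2 := by linarith
    _ = ε := by ring


lemma step (m : ℕ) (hm : 1 ≤ m) (Q : ℕ → ℤ → ℝ)
    (hrec : ∀ d : ℕ, ∀ k : ℤ, 0 ≤ k → k ≤ (m : ℤ) →
      Q (d + 1) k = (1 / 2) *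
        (Q d (k - 1) * ((m : ℝ) - (k : ℝ) + 1) / (m : ℝ) +
          Q d k * ((m : ℝ) + (k : ℝ)) / (m : ℝ)))
    (hm1 : (1:ℝ) ≤ (m:ℝ)) (hmpos : (0:ℝ) < (m:ℝ))
    (k : ℤ) (hk0 : 0 ≤ k) (hk1 : k ≤ (m : ℤ) - 1)
    (hprev : Filter.Tendsto (fun d : ℕ => Q d (k - 1)) Filter.atTop (nhds 0)) :
    Filter.Tendsto (fun d : ℕ => Q d k) Filter.atTop (nhds 0) := by
  have hk0' : (0:ℝ) ≤ (k:ℝ) := by exact_mod_cast hk0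
  have hk1' : (k:ℝ) ≤ (m:ℝ) - 1 := by exact_mod_cast hk1
  have hkm : k ≤ (m:ℤ) := by omega
  set c : ℝ := ((m:ℝ) + (k:ℝ)) / (2 * (m:ℝ)) with hc
  set A : ℝ := ((m:ℝ) - (k:ℝ) + 1) / (2 * (m:ℝ)) with hA
  have hc0 : 0 ≤ c := by positivity
  have hc1 : c < 1 := by
    rw [hc, div_lt_one (by positivity)]; linarith
  have hA0 : 0 ≤ A := by
    rw [hA]; apply div_nonneg _ (by positivity); linarith
  apply aux_contract_tendsto c hc0 hc1 _ (fun d => A * |Q d (k - 1)|)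
  · intro n; positivity
  · intro d
    have heq : Q (d + 1) k = A * Q d (k - 1) + c * Q d k := by
      rw [hrec d k hk0 hkm, hA, hc]
      field_simp
    rw [heq]
    calc |A * Q d (k - 1) + c * Q d k| ≤ |A * Q d (k - 1)| + |c * Q d k| := abs_add_le _ _
      _ = A * |Q d (k - 1)| + c * |Q d k| := by
          rw [abs_mul, abs_mul, abs_of_nonneg hA0, abs_of_nonneg hc0]
      _ = c * |Q d k| + A * |Q d (k - 1)| := by ring
  · have := (hprev.abs).const_mul A
    simpa using this

/-- Fix `m ≥ 1` and let `Q : ℕ → ℤ → ℝ` (restricted to `k ∈ {0,…,m}`) satisfy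
`Q 0 0 = 1`, `Q 0 k = 0` for `1 ≤ k ≤ m`, the convention `Q d (-1) = 0`, and for
`d ≥ 1` and `0 ≤ k ≤ m`:
`Q d k = (1/2)·[Q (d-1) (k-1)·(m−k+1)/m + Q (d-1) k·(m+k)/m]`.
Then for every fixed `k` with `0 ≤ k ≤ m − 1`, `Q d k → 0` as `d → ∞`. -/
theorem Q_low_order_tendsto_zero (m : ℕ) (hm : 1 ≤ m) (Q : ℕ → ℤ → ℝ)
    (h00 : Q 0 0 = 1)
    (h0 : ∀ k : ℤ, 1 ≤ k → k ≤ (m : ℤ) → Q 0 k = 0)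
    (hneg : ∀ d : ℕ, Q d (-1) = 0)
    (hrec : ∀ d : ℕ, ∀ k : ℤ, 0 ≤ k → k ≤ (m : ℤ) →
      Q (d + 1) k = (1 / 2) *
        (Q d (k - 1) * ((m : ℝ) - (k : ℝ) + 1) / (m : ℝ) +
          Q d k * ((m : ℝ) + (k : ℝ)) / (m : ℝ))) :
    ∀ k : ℤ, 0 ≤ k → k ≤ (m : ℤ) - 1 →
      Filter.Tendsto (fun d : ℕ => Q d k) Filter.atTop (nhds 0) := by
  have hm1 : (1:ℝ) ≤ (m:ℝ) := by exact_mod_cast hm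
  have hmpos : (0:ℝ) < (m:ℝ) := by linarith
  -- main claim by induction on natural n, with prior limit for k-1 supplied
  have main : ∀ n : ℕ, (n : ℤ) ≤ (m : ℤ) - 1 →
      Filter.Tendsto (fun d : ℕ => Q d (n : ℤ)) Filter.atTop (nhds 0) := by
    intro n
    induction n with
    | zero =>
      intro _
      -- previous sequence is Q d (-1) = 0
      have hprev : Filter.Tendsto (fun d : ℕ => Q d ((0:ℤ) - 1)) Filter.atTop (nhds 0) := by
        simpa [hneg] using (tendsto_const_nhds : Filter.Tendsto (fun _ : ℕ => (0:ℝ)) _ _)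
      exact step m hm Q hrec hm1 hmpos 0 le_rfl (by omega) hprev
    | succ n ih =>
      intro hle
      have hprev : Filter.Tendsto (fun d : ℕ => Q d (((n:ℤ)+1) - 1)) Filter.atTop (nhds 0) := by
        simpa using ih (by omega)
      have := step m hm Q hrec hm1 hmpos ((n:ℤ)+1) (by positivity) (by push_cast at hle ⊢; omega) hprev
      simpa using this
  intro k hk0 hk1
  obtain ⟨n, rfl⟩ := Int.eq_ofNat_of_zero_le hk0
  exact main n hk1
end

section
/- Let A ⊆ ℝ² be a set of pairwise incomparable points and let y ∈ ℝ². Suppose p ∈ A satisfies p₁ ≤ y₁ and p₁ is maximal with this property among points of A (i.e., every a ∈ A with a₁ ≤ y₁ satisfies a₁ ≤ p₁). Then there exists a ∈ A with a ⪯ y if and only if p₂ ≤ y₂. -/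
/-- Let `A ⊆ ℝ²` be a set of pairwise incomparable points (w.r.t. the dominance
relation `a ⪯ b` iff `a₁ ≤ b₁` and `a₂ ≤ b₂`) and let `y ∈ ℝ²`. Suppose `p ∈ A`
satisfies `p₁ ≤ y₁` and `p₁` is maximal with this property among points of `A`.
Then some `a ∈ A` weakly dominates `y` iff `p₂ ≤ y₂`. -/
theorem dominated_iff_left_neighbor_dominates (A : Set (ℝ × ℝ))
    (hA : ∀ a ∈ A, ∀ b ∈ A, a ≠ b →
      ¬(a.1 ≤ b.1 ∧ a.2 ≤ b.2) ∧ ¬(b.1 ≤ a.1 ∧ b.2 ≤ a.2))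
    (y p : ℝ × ℝ) (hp : p ∈ A) (hp1 : p.1 ≤ y.1)
    (hmax : ∀ a ∈ A, a.1 ≤ y.1 → a.1 ≤ p.1) :
    (∃ a ∈ A, a.1 ≤ y.1 ∧ a.2 ≤ y.2) ↔ p.2 ≤ y.2 := by
  constructor
  · rintro ⟨a, ha, ha1, ha2⟩
    by_cases hap : a = p
    · subst hap; exact ha2
    · have h := (hA a ha p hp hap).1
      push_neg at h
      exact le_trans (h (hmax a ha ha1)).le ha2
  · intro h2
    exact ⟨p, hp, hp1, h2⟩
end

section
/- Let A ⊆ ℝ² be a set of pairwise incomparable points, let y ∈ ℝ², and let a, b, c ∈ A with a₁ ≤ c₁ ≤ b₁. If y ⪯ a and y ⪯ b, then y ⪯ c. In other words, in an archive of mutually non-dominated points in ℝ² sorted by the first coordinate, the points weakly dominated by a candidate y form a contiguous segment. -/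
/-- Let `A ⊆ ℝ²` be a set of pairwise incomparable points (w.r.t. the dominance
relation `a ⪯ b` iff `a₁ ≤ b₁` and `a₂ ≤ b₂`), let `y ∈ ℝ²`, and let
`a, b, c ∈ A` with `a₁ ≤ c₁ ≤ b₁`. If `y ⪯ a` and `y ⪯ b` then `y ⪯ c`:
the points weakly dominated by `y` form a contiguous segment. -/
theorem dominated_points_contiguous (A : Set (ℝ × ℝ))
    (hA : ∀ a ∈ A, ∀ b ∈ A, a ≠ b →
      ¬(a.1 ≤ b.1 ∧ a.2 ≤ b.2) ∧ ¬(b.1 ≤ a.1 ∧ b.2 ≤ a.2))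
    (y : ℝ × ℝ) (a b c : ℝ × ℝ) (ha : a ∈ A) (hb : b ∈ A) (hc : c ∈ A)
    (hac : a.1 ≤ c.1) (hcb : c.1 ≤ b.1)
    (hya : y.1 ≤ a.1 ∧ y.2 ≤ a.2) (hyb : y.1 ≤ b.1 ∧ y.2 ≤ b.2) :
    y.1 ≤ c.1 ∧ y.2 ≤ c.2 := by
  refine ⟨le_trans hya.1 hac, ?_⟩
  by_cases h : c = b
  · exact h ▸ hyb.2
  · have := (hA c hc b hb h).1
    push_neg at this
    exact le_trans hyb.2 (this hcb).le
end

section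
/- Fix an integer m ≥ 1 and define Q : ℕ → {0,1,…,m} → ℝ by Q_0(0) = 1, Q_0(k) = 0 for k ≥ 1, and for d ≥ 1: Q_d(k) = (1/2)·[Q_{d−1}(k−1)·(m−k+1)/m + Q_{d−1}(k)·(m+k)/m], with the convention Q_{d−1}(−1) = 0. Then the fraction of nodes at depth d whose order is at most m−1 tends to zero: lim_{d→∞} Σ_{k=0}^{m−1} Q_d(k) = 0. -/
/-!
For `0 ≤ k < m` the recurrence reads
`Q (d+1) k = (m+k)/(2m) · Q d k + (m-k+1)/(2m) · Q d (k-1)`,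
a contraction of ratio `(m+k)/(2m) < 1` driven by the previous order. A contraction driven by a
null sequence is null, so induction on `k`, starting from `Q d (-1) = 0`, shows `Q d k → 0` for
every `k < m`.
-/

open Filter Topology

theorem tendsto_nhds_zero_of_succ_eq_smul_add {𝕜 E : Type*} [NormedField 𝕜]
    [SeminormedAddCommGroup E] [NormedSpace 𝕜 E] {a : 𝕜} (ha : ‖a‖ < 1) {x y : ℕ → E}
    (hx : ∀ n, x (n + 1) = a • x n + y n) (hy : Tendsto y atTop (𝓝 0)) :
    Tendsto x atTop (𝓝 0) := by
  rw [Metric.tendsto_atTop] at hy ⊢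
  intro ε hε
  obtain ⟨N, hN⟩ := hy ((1 - ‖a‖) * (ε / 2)) (mul_pos (sub_pos.2 ha) (half_pos hε))
  have hbound : ∀ k, ‖x (N + k)‖ ≤ ε / 2 + ‖a‖ ^ k * ‖x N‖ := by
    intro k
    induction k with
    | zero => simp only [add_zero, pow_zero, one_mul]; linarith
    | succ k ih =>
      have hyk : ‖y (N + k)‖ < (1 - ‖a‖) * (ε / 2) := by
        simpa only [dist_zero_right] using hN (N + k) (Nat.le_add_right N k)
      calc ‖x (N + (k + 1))‖ = ‖a • x (N + k) + y (N + k)‖ := by rw [← add_assoc, hx]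
        _ ≤ ‖a‖ * ‖x (N + k)‖ + ‖y (N + k)‖ := (norm_add_le _ _).trans_eq (by rw [norm_smul])
        _ ≤ ‖a‖ * (ε / 2 + ‖a‖ ^ k * ‖x N‖) + (1 - ‖a‖) * (ε / 2) := by gcongr
        _ = ε / 2 + ‖a‖ ^ (k + 1) * ‖x N‖ := by ring
  have hdecay : Tendsto (fun k => ‖a‖ ^ k * ‖x N‖) atTop (𝓝 0) := by
    simpa using (tendsto_pow_atTop_nhds_zero_of_lt_one (norm_nonneg a) ha).mul_const ‖x N‖
  obtain ⟨K, hK⟩ := (hdecay.eventually (gt_mem_nhds (half_pos hε))).exists_forall_of_atTop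
  refine ⟨N + K, fun n hn => ?_⟩
  obtain ⟨k, rfl⟩ := Nat.exists_eq_add_of_le (le_of_add_le_left hn)
  rw [dist_zero_right]
  linarith [hbound k, hK k (by omega)]

theorem tendsto_zero_of_tendsto_zero_pred {m : ℕ} {Q : ℕ → ℤ → ℝ} {k : ℤ} (hk0 : 0 ≤ k)
    (hkm : k < m)
    (hrec : ∀ d : ℕ, Q (d + 1) k = (1 / 2) *
        (Q d (k - 1) * ((m : ℝ) - (k : ℝ) + 1) / (m : ℝ) +
          Q d k * ((m : ℝ) + (k : ℝ)) / (m : ℝ)))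
    (hpred : Tendsto (fun d => Q d (k - 1)) atTop (𝓝 0)) :
    Tendsto (fun d => Q d k) atTop (𝓝 0) := by
  have hk0' : (0 : ℝ) ≤ k := by exact_mod_cast hk0
  have hkm' : (k : ℝ) < m := by exact_mod_cast hkm
  have hstay : ‖((m : ℝ) + k) / (2 * m)‖ < 1 := by
    rw [Real.norm_of_nonneg (by positivity), div_lt_one (by linarith)]
    linarith
  refine tendsto_nhds_zero_of_succ_eq_smul_add hstay (fun d => ?_)
    (by simpa using hpred.const_mul (((m : ℝ) - k + 1) / (2 * m)))
  rw [hrec d, smul_eq_mul]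
  ring

theorem Q_low_order_sum_tendsto_zero_general (m : ℕ) (Q : ℕ → ℤ → ℝ)
    (hneg : ∀ d : ℕ, Q d (-1) = 0)
    (hrec : ∀ d : ℕ, ∀ k : ℤ, 0 ≤ k → k ≤ (m : ℤ) →
      Q (d + 1) k = (1 / 2) *
        (Q d (k - 1) * ((m : ℝ) - (k : ℝ) + 1) / (m : ℝ) +
          Q d k * ((m : ℝ) + (k : ℝ)) / (m : ℝ))) :
    Filter.Tendsto (fun d : ℕ => ∑ k ∈ Finset.range m, Q d (k : ℤ))
      Filter.atTop (nhds 0) := by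
  have hlow : ∀ k : ℕ, k < m → Tendsto (fun d => Q d k) atTop (𝓝 0) := by
    intro k
    induction k with
    | zero =>
      intro hm
      refine tendsto_zero_of_tendsto_zero_pred le_rfl (by exact_mod_cast hm)
        (fun d => hrec d 0 le_rfl (by omega)) ?_
      simp [hneg]
    | succ k ih =>
      intro hk
      refine tendsto_zero_of_tendsto_zero_pred (by positivity) (by exact_mod_cast hk)
        (fun d => hrec d _ (by positivity) (by omega)) ?_
      simpa using ih (by omega)
  simpa using tendsto_finsetSum (Finset.range m) fun k hk => hlow k (Finset.mem_range.1 hk)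

/-- Fix `m ≥ 1` and let `Q : ℕ → ℤ → ℝ` (restricted to `k ∈ {0,…,m}`) satisfy
`Q 0 0 = 1`, `Q 0 k = 0` for `1 ≤ k ≤ m`, the convention `Q d (-1) = 0`, and for
`d ≥ 1` and `0 ≤ k ≤ m`:
`Q d k = (1/2)·[Q (d-1) (k-1)·(m−k+1)/m + Q (d-1) k·(m+k)/m]`.
Then the fraction of nodes at depth `d` whose order is at most `m − 1` tends to
zero: `lim_{d→∞} ∑_{k=0}^{m−1} Q d k = 0`. -/
theorem Q_low_order_sum_tendsto_zero (m : ℕ) (hm : 1 ≤ m) (Q : ℕ → ℤ → ℝ)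
    (h00 : Q 0 0 = 1)
    (h0 : ∀ k : ℤ, 1 ≤ k → k ≤ (m : ℤ) → Q 0 k = 0)
    (hneg : ∀ d : ℕ, Q d (-1) = 0)
    (hrec : ∀ d : ℕ, ∀ k : ℤ, 0 ≤ k → k ≤ (m : ℤ) →
      Q (d + 1) k = (1 / 2) *
        (Q d (k - 1) * ((m : ℝ) - (k : ℝ) + 1) / (m : ℝ) +
          Q d k * ((m : ℝ) + (k : ℝ)) / (m : ℝ))) :
    Filter.Tendsto (fun d : ℕ => ∑ k ∈ Finset.range m, Q d (k : ℤ))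
      Filter.atTop (nhds 0) :=
  Q_low_order_sum_tendsto_zero_general m Q hneg hrec
end
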